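/- Let τ = (τ_1,...,τ_N) be an ordered partition of B, a an index with |τ_a| ≥ 2, and i ≠ j ∈ τ_a. Then the element r^(1)_{ij}(τ,a) := ∑_{α: iαj} m(τ(α)) − ∑_{α: jαi} m(τ(α)) belongs to the ideal I_B, where α runs over 2-partitions of τ_a, iαj means i ∈ α_1 and j ∈ α_2, and τ(α) is the refinement of τ replacing τ_a by (α_1, α_2). -/
import Mathlib


/-- The ideal `I_B` in the ring `R_B` with generators `l_σ` indexed by 2-partitions
(encoded by their first components), generated by the linear relations `r¹_{ij}` and the
quadratic relations `l_σ l_τ` for incompatible pairs. -/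
noncomputable def IB (α : Type) [Fintype α] [DecidableEq α]
    (k : Type) [CommRing k] : Ideal (MvPolynomial (Finset α) k) :=
  Ideal.span
    ({x | ∃ i j : α, i ≠ j ∧ x =
        (∑ s : Finset α, if i ∈ s ∧ j ∉ s then MvPolynomial.X s else 0) -
        (∑ s : Finset α, if j ∈ s ∧ i ∉ s then MvPolynomial.X s else 0)} ∪
     {x | ∃ s t : Finset α,
        (∃ i j : α, i ∈ s ∧ j ∉ s ∧ j ∈ t ∧ i ∉ t) ∧
        x = MvPolynomial.X s * MvPolynomial.X t})

/-- The partial union `τ_1 ∪ … ∪ τ_{a+1}` of an ordered partition. -/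
def pu {α : Type} [DecidableEq α] {M : ℕ} [Fintype α]
    (τ : Fin (M + 1) → Finset α) (a : Fin M) : Finset α :=
  (Finset.univ.filter (fun b : Fin (M + 1) => b.val ≤ a.val)).biUnion τ

/-- The good monomial `m(τ)` of an ordered partition `τ` of length `N+1`: the product of
the variables attached to its good family of 2-partitions. -/
noncomputable def gm {α : Type} [Fintype α] [DecidableEq α] {k : Type} [CommRing k]
    {N : ℕ} (τ : Fin (N + 1) → Finset α) : MvPolynomial (Finset α) k :=
  ∏ a : Fin N, MvPolynomial.X (pu τ a)

/-- The refinement `τ(α)` of an ordered partition `τ`, replacing the part with index `a`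
by the two sets `s1, s2`. -/
def refine {α : Type} {N : ℕ} (τ : Fin (N + 1) → Finset α) (a : Fin (N + 1))
    (s1 s2 : Finset α) : Fin (N + 2) → Finset α := fun b =>
  if hb : b.val < a.val then τ ⟨b.val, by have := a.isLt; omega⟩
  else if b.val = a.val then s1
  else if b.val = a.val + 1 then s2
  else τ ⟨b.val - 1, by have := b.isLt; omega⟩

section Aux

lemma mem_pu {α : Type} [DecidableEq α] {M : ℕ} [Fintype α]
    {τ : Fin (M + 1) → Finset α} {a : Fin M} {x : α} :
    x ∈ pu τ a ↔ ∃ c : Fin (M + 1), c.val ≤ a.val ∧ x ∈ τ c := by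
  simp [pu]

lemma refine_lt {α : Type} {N : ℕ} (τ : Fin (N + 1) → Finset α) (a : Fin (N + 1))
    (s1 s2 : Finset α) (c : Fin (N + 2)) (h : c.val < a.val) :
    refine τ a s1 s2 c = τ ⟨c.val, by have := a.isLt; omega⟩ := by
  simp only [refine, dif_pos h]

lemma refine_eq {α : Type} {N : ℕ} (τ : Fin (N + 1) → Finset α) (a : Fin (N + 1))
    (s1 s2 : Finset α) (c : Fin (N + 2)) (h : c.val = a.val) :
    refine τ a s1 s2 c = s1 := by
  simp only [refine, dif_neg (by omega : ¬ c.val < a.val), if_pos h]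

lemma refine_eq1 {α : Type} {N : ℕ} (τ : Fin (N + 1) → Finset α) (a : Fin (N + 1))
    (s1 s2 : Finset α) (c : Fin (N + 2)) (h : c.val = a.val + 1) :
    refine τ a s1 s2 c = s2 := by
  simp only [refine, dif_neg (by omega : ¬ c.val < a.val), if_neg (by omega : ¬ c.val = a.val),
    if_pos h]

lemma refine_gt {α : Type} {N : ℕ} (τ : Fin (N + 1) → Finset α) (a : Fin (N + 1))
    (s1 s2 : Finset α) (c : Fin (N + 2)) (h : a.val + 1 < c.val) :
    refine τ a s1 s2 c = τ ⟨c.val - 1, by have := c.isLt; omega⟩ := by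
  simp only [refine, dif_neg (by omega : ¬ c.val < a.val), if_neg (by omega : ¬ c.val = a.val),
    if_neg (by omega : ¬ c.val = a.val + 1)]

variable {α : Type} [Fintype α] [DecidableEq α] {N : ℕ}

lemma pu_refine_lt (τ : Fin (N + 1) → Finset α) (a : Fin (N + 1)) (s1 s2 : Finset α)
    (b : Fin (N + 1)) (hb : b.val < a.val) :
    pu (refine τ a s1 s2) b = pu τ ⟨b.val, by have := a.isLt; omega⟩ := by
  ext x
  simp only [mem_pu]
  constructor
  · rintro ⟨c, hc, hx⟩
    rw [refine_lt τ a s1 s2 c (by omega)] at hx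
    exact ⟨⟨c.val, by have := a.isLt; omega⟩, hc, hx⟩
  · rintro ⟨c, hc, hx⟩
    refine ⟨⟨c.val, by omega⟩, by (try simp only [Fin.val_mk]); omega, ?_⟩
    rw [refine_lt τ a s1 s2 _ (by (try simp only [Fin.val_mk]); omega)]
    exact hx

lemma pu_refine_eq (τ : Fin (N + 1) → Finset α) (a : Fin (N + 1)) (s1 s2 : Finset α)
    (b : Fin (N + 1)) (hb : b.val = a.val) :
    pu (refine τ a s1 s2) b =
      ((Finset.univ.filter (fun c : Fin (N + 1) => c.val < a.val)).biUnion τ) ∪ s1 := by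
  ext x
  simp only [mem_pu, Finset.mem_union, Finset.mem_biUnion, Finset.mem_filter,
    Finset.mem_univ, true_and]
  constructor
  · rintro ⟨c, hc, hx⟩
    rcases lt_or_eq_of_le (by omega : c.val ≤ a.val) with h | h
    · rw [refine_lt τ a s1 s2 c h] at hx
      exact Or.inl ⟨⟨c.val, by have := a.isLt; omega⟩, h, hx⟩
    · rw [refine_eq τ a s1 s2 c h] at hx
      exact Or.inr hx
  · rintro (⟨c, hc, hx⟩ | hx)
    · refine ⟨⟨c.val, by omega⟩, by (try simp only [Fin.val_mk]); omega, ?_⟩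
      rw [refine_lt τ a s1 s2 _ hc]
      exact hx
    · refine ⟨⟨a.val, by omega⟩, by (try simp only [Fin.val_mk]); omega, ?_⟩
      rw [refine_eq τ a s1 s2 _ rfl]
      exact hx

lemma pu_refine_gt (τ : Fin (N + 1) → Finset α) (a : Fin (N + 1)) (s1 s2 : Finset α)
    (hs : s1 ∪ s2 = τ a) (b : Fin (N + 1)) (hb : a.val < b.val) :
    pu (refine τ a s1 s2) b = pu τ ⟨b.val - 1, by have := b.isLt; omega⟩ := by
  have hb1 : 1 ≤ b.val := by omega
  ext x
  simp only [mem_pu]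
  constructor
  · rintro ⟨c, hc, hx⟩
    rcases Nat.lt_trichotomy c.val a.val with h | h | h
    · rw [refine_lt τ a s1 s2 c h] at hx
      exact ⟨⟨c.val, by have := a.isLt; omega⟩, by (try simp only [Fin.val_mk]); omega, hx⟩
    · rw [refine_eq τ a s1 s2 c h] at hx
      refine ⟨a, by (try simp only [Fin.val_mk]); omega, ?_⟩
      rw [← hs]; exact Finset.mem_union_left _ hx
    · rcases eq_or_lt_of_le (by omega : a.val + 1 ≤ c.val) with h2 | h2
      · rw [refine_eq1 τ a s1 s2 c h2.symm] at hx
        refine ⟨a, by (try simp only [Fin.val_mk]); omega, ?_⟩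
        rw [← hs]; exact Finset.mem_union_right _ hx
      · rw [refine_gt τ a s1 s2 c h2] at hx
        exact ⟨⟨c.val - 1, by have := c.isLt; omega⟩, by (try simp only [Fin.val_mk]); omega, hx⟩
  · rintro ⟨c, hc, hx⟩
    try simp only [Fin.val_mk] at hc
    rcases Nat.lt_trichotomy c.val a.val with h | h | h
    · refine ⟨⟨c.val, by have := c.isLt; omega⟩, by (try simp only [Fin.val_mk]); omega, ?_⟩
      rw [refine_lt τ a s1 s2 _ h]
      exact hx
    · have hxc : x ∈ s1 ∪ s2 := by
        rw [hs]
        have : c = a := Fin.ext h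
        rwa [this] at hx
      rcases Finset.mem_union.mp hxc with h1 | h2
      · refine ⟨⟨a.val, by omega⟩, by (try simp only [Fin.val_mk]); omega, ?_⟩
        rw [refine_eq τ a s1 s2 _ rfl]; exact h1
      · refine ⟨⟨a.val + 1, by have := a.isLt; omega⟩, by (try simp only [Fin.val_mk]); omega, ?_⟩
        rw [refine_eq1 τ a s1 s2 _ rfl]; exact h2
    · refine ⟨⟨c.val + 1, by have := c.isLt; omega⟩, by (try simp only [Fin.val_mk]); omega, ?_⟩
      rw [refine_gt τ a s1 s2 _ (by (try simp only [Fin.val_mk]); omega)]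
      simpa using hx

variable {k : Type} [CommRing k]

lemma gm_refine (τ : Fin (N + 1) → Finset α) (a : Fin (N + 1)) (s1 s2 : Finset α)
    (hs : s1 ∪ s2 = τ a) :
    gm (k := k) (refine τ a s1 s2) =
      MvPolynomial.X (((Finset.univ.filter (fun c : Fin (N + 1) => c.val < a.val)).biUnion τ) ∪ s1)
        * gm τ := by
  unfold gm
  rw [Fin.prod_univ_succAbove (fun b : Fin (N + 1) =>
    (MvPolynomial.X (pu (refine τ a s1 s2) b) : MvPolynomial (Finset α) k))
    ⟨a.val, by have := a.isLt; omega⟩]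
  congr 1
  · rw [pu_refine_eq τ a s1 s2 _ rfl]
  · apply Finset.prod_congr rfl
    intro c _
    congr 1
    rcases Nat.lt_or_ge c.val a.val with h | h
    · have hsa : (⟨a.val, by have := a.isLt; omega⟩ : Fin (N+1)).succAbove c = c.castSucc := by
        rw [Fin.succAbove_of_castSucc_lt]
        simp [Fin.lt_def, h]
      rw [hsa, pu_refine_lt τ a s1 s2 _ (by simp [h])]
      congr 1
    · have hsa : (⟨a.val, by have := a.isLt; omega⟩ : Fin (N+1)).succAbove c = c.succ := by
        rw [Fin.succAbove_of_le_castSucc]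
        simp [Fin.le_def, h]
      rw [hsa, pu_refine_gt τ a s1 s2 hs _ (by simp; omega)]
      congr 1

/-- For a "bad" set `s` (not sandwiched between `U` and `U ∪ τ a`), the product
`X s * gm τ` lies in the ideal via a quadratic relation. -/
lemma bad_term (τ : Fin (N + 1) → Finset α)
    (hdisj : ∀ i j, i ≠ j → Disjoint (τ i) (τ j))
    (hcov : Finset.univ.biUnion τ = Finset.univ)
    (a : Fin (N + 1)) (s : Finset α) (p q : α)
    (hp : p ∈ τ a) (hps : p ∈ s) (hq : q ∈ τ a) (hqs : q ∉ s)
    (hbad : ¬((Finset.univ.filter (fun c : Fin (N + 1) => c.val < a.val)).biUnion τ ⊆ s ∧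
        s ⊆ (Finset.univ.filter (fun c : Fin (N + 1) => c.val < a.val)).biUnion τ ∪ τ a)) :
    MvPolynomial.X s * gm (k := k) τ ∈ IB α k := by
  classical
  set U : Finset α := (Finset.univ.filter (fun c : Fin (N + 1) => c.val < a.val)).biUnion τ with hU
  have hUd : Disjoint U (τ a) := by
    rw [hU]
    refine (Finset.disjoint_biUnion_left _ _ _).mpr ?_
    intro b hb
    simp only [Finset.mem_filter, Finset.mem_univ, true_and] at hb
    exact hdisj b a (by intro h; rw [h] at hb; omega)
  have hpU : p ∉ U := fun h => (Finset.disjoint_left.mp hUd h) hp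
  have hqU : q ∉ U := fun h => (Finset.disjoint_left.mp hUd h) hq
  -- find an index b0 : Fin N such that X s * X (pu τ b0) is a quadratic generator
  have key : ∃ b0 : Fin N, MvPolynomial.X (s : Finset α) *
      (MvPolynomial.X (pu τ b0) : MvPolynomial (Finset α) k) ∈ IB α k := by
    by_cases hA : U ⊆ s
    · -- then s ⊄ U ∪ τ a
      have hB : ¬ s ⊆ U ∪ τ a := fun h => hbad ⟨hA, h⟩
      obtain ⟨x, hxs, hx⟩ := Finset.not_subset.mp hB
      have haN : a.val < N := by
        by_contra h
        have ha : a.val = N := by have := a.isLt; omega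
        have hxu : x ∈ Finset.univ.biUnion τ := by rw [hcov]; exact Finset.mem_univ x
        obtain ⟨c, _, hxc⟩ := Finset.mem_biUnion.mp hxu
        rcases Nat.lt_or_ge c.val a.val with h1 | h1
        · exact hx (Finset.mem_union_left _ (Finset.mem_biUnion.mpr
            ⟨c, Finset.mem_filter.mpr ⟨Finset.mem_univ c, h1⟩, hxc⟩))
        · have : c = a := Fin.ext (by have := c.isLt; omega)
          exact hx (Finset.mem_union_right _ (this ▸ hxc))
      refine ⟨⟨a.val, haN⟩, ?_⟩
      have hpu : pu τ ⟨a.val, haN⟩ = U ∪ τ a := by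
        ext y
        simp only [mem_pu, Fin.val_mk, hU, Finset.mem_union, Finset.mem_biUnion,
          Finset.mem_filter, Finset.mem_univ, true_and]
        constructor
        · rintro ⟨c, hc, hy⟩
          rcases Nat.lt_or_ge c.val a.val with h1 | h1
          · exact Or.inl ⟨c, h1, hy⟩
          · have : c = a := Fin.ext (by omega)
            exact Or.inr (this ▸ hy)
        · rintro (⟨c, hc, hy⟩ | hy)
          · exact ⟨c, by omega, hy⟩
          · exact ⟨a, le_refl _, hy⟩
      rw [hpu]
      exact Ideal.subset_span (Or.inr ⟨s, U ∪ τ a,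
        ⟨x, q, hxs, hqs, Finset.mem_union_right _ hq, hx⟩, rfl⟩)
    · obtain ⟨x, hxU, hxs⟩ := Finset.not_subset.mp hA
      have ha1 : 1 ≤ a.val := by
        by_contra h
        obtain ⟨c, hc, _⟩ := Finset.mem_biUnion.mp hxU
        simp only [Finset.mem_filter, Finset.mem_univ, true_and] at hc
        omega
      refine ⟨⟨a.val - 1, by have := a.isLt; omega⟩, ?_⟩
      have hpu : pu τ ⟨a.val - 1, by have := a.isLt; omega⟩ = U := by
        ext y
        simp only [mem_pu, Fin.val_mk, hU, Finset.mem_biUnion, Finset.mem_filter,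
          Finset.mem_univ, true_and]
        constructor
        · rintro ⟨c, hc, hy⟩; exact ⟨c, by omega, hy⟩
        · rintro ⟨c, hc, hy⟩; exact ⟨c, by omega, hy⟩
      rw [hpu]
      exact Ideal.subset_span (Or.inr ⟨s, U,
        ⟨p, x, hps, hxs, hxU, hpU⟩, rfl⟩)
  obtain ⟨b0, hb0⟩ := key
  have : MvPolynomial.X s * gm (k := k) τ =
      (∏ b ∈ Finset.univ.erase b0, (MvPolynomial.X (pu τ b) : MvPolynomial (Finset α) k)) *
        (MvPolynomial.X s * MvPolynomial.X (pu τ b0)) := by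
    unfold gm
    rw [← Finset.mul_prod_erase Finset.univ _ (Finset.mem_univ b0)]
    ring
  rw [this]
  exact Ideal.mul_mem_left _ _ hb0

end Aux

/-- For an ordered partition `τ`, a part `τ_a` containing two distinct elements `i ≠ j`,
the element `r¹_{ij}(τ,a) = ∑_{α: iαj} m(τ(α)) − ∑_{α: jαi} m(τ(α))` belongs to the
ideal `I_B`; here `α` runs over 2-partitions of `τ_a` and `τ(α)` is the refinement of
`τ` replacing `τ_a` by `(α_1, α_2)`. -/
theorem stmt_15 {α : Type} [Fintype α] [DecidableEq α] {k : Type} [CommRing k]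
    (N : ℕ) (τ : Fin (N + 1) → Finset α)
    (hne : ∀ i, (τ i).Nonempty) (hdisj : ∀ i j, i ≠ j → Disjoint (τ i) (τ j))
    (hcov : Finset.univ.biUnion τ = Finset.univ)
    (a : Fin (N + 1)) (i j : α) (hi : i ∈ τ a) (hj : j ∈ τ a) (hij : i ≠ j) :
    (∑ s1 : Finset α,
        if s1 ⊆ τ a ∧ i ∈ s1 ∧ j ∈ τ a \ s1 then
          gm (k := k) (refine τ a s1 (τ a \ s1)) else 0)
      - (∑ s1 : Finset α,
        if s1 ⊆ τ a ∧ j ∈ s1 ∧ i ∈ τ a \ s1 then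
          gm (k := k) (refine τ a s1 (τ a \ s1)) else 0)
      ∈ IB α k := by
  classical
  set U : Finset α := (Finset.univ.filter (fun c : Fin (N + 1) => c.val < a.val)).biUnion τ with hU
  have hUd : Disjoint U (τ a) := by
    rw [hU]
    refine (Finset.disjoint_biUnion_left _ _ _).mpr ?_
    intro b hb
    simp only [Finset.mem_filter, Finset.mem_univ, true_and] at hb
    exact hdisj b a (by intro h; rw [h] at hb; omega)
  -- Step 1: each sum factors as (sum of X (U ∪ s1)) * gm τ, then reindex by s := U ∪ s1
  have step12 : ∀ p q : α, p ∈ τ a → q ∈ τ a →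
      (∑ s1 : Finset α,
        if s1 ⊆ τ a ∧ p ∈ s1 ∧ q ∈ τ a \ s1 then
          gm (k := k) (refine τ a s1 (τ a \ s1)) else 0) =
      (∑ s : Finset α, if (p ∈ s ∧ q ∉ s) ∧ (U ⊆ s ∧ s ⊆ U ∪ τ a) then
          (MvPolynomial.X s : MvPolynomial (Finset α) k) else 0) * gm τ := by
    intro p q hp hq
    have hpU : p ∉ U := fun h => (Finset.disjoint_left.mp hUd h) hp
    have hqU : q ∉ U := fun h => (Finset.disjoint_left.mp hUd h) hq
    rw [Finset.sum_mul]
    simp only [ite_mul, zero_mul]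
    rw [← Finset.sum_filter, ← Finset.sum_filter]
    refine Finset.sum_nbij' (fun s1 => U ∪ s1) (fun s => s \ U) ?_ ?_ ?_ ?_ ?_
    · intro s1 hs1
      simp only [Finset.mem_filter, Finset.mem_univ, true_and] at hs1 ⊢
      obtain ⟨hsub, hps, hqs⟩ := hs1
      rcases Finset.mem_sdiff.mp hqs with ⟨hqa, hqs1⟩
      refine ⟨⟨Finset.mem_union_right _ hps, ?_⟩, Finset.subset_union_left, ?_⟩
      · intro h
        rcases Finset.mem_union.mp h with h | h
        · exact hqU h
        · exact hqs1 h
      · exact Finset.union_subset_union_right hsub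
    · intro s hs
      simp only [Finset.mem_filter, Finset.mem_univ, true_and] at hs ⊢
      obtain ⟨⟨hps, hqs⟩, hUs, hsU⟩ := hs
      refine ⟨?_, Finset.mem_sdiff.mpr ⟨hps, hpU⟩, Finset.mem_sdiff.mpr ⟨hq, ?_⟩⟩
      · intro x hx
        rcases Finset.mem_sdiff.mp hx with ⟨hxs, hxU⟩
        rcases Finset.mem_union.mp (hsU hxs) with h | h
        · exact absurd h hxU
        · exact h
      · intro h
        exact hqs (Finset.mem_sdiff.mp h).1
    · intro s1 hs1
      simp only [Finset.mem_filter, Finset.mem_univ, true_and] at hs1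
      exact Finset.union_sdiff_cancel_left (Finset.disjoint_of_subset_right hs1.1 hUd)
    · intro s hs
      simp only [Finset.mem_filter, Finset.mem_univ, true_and] at hs
      exact Finset.union_sdiff_of_subset hs.2.1
    · intro s1 hs1
      simp only [Finset.mem_filter, Finset.mem_univ, true_and] at hs1
      rw [gm_refine τ a s1 (τ a \ s1)
        (Finset.union_sdiff_of_subset hs1.1), ← hU]
  -- the linear generator
  have hr : (∑ s : Finset α, if i ∈ s ∧ j ∉ s then (MvPolynomial.X s : MvPolynomial (Finset α) k) else 0) -
      (∑ s : Finset α, if j ∈ s ∧ i ∉ s then MvPolynomial.X s else 0) ∈ IB α k :=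
    Ideal.subset_span (Or.inl ⟨i, j, hij, rfl⟩)
  -- split each generator sum into good and bad parts
  have split : ∀ p q : α,
      (∑ s : Finset α, if p ∈ s ∧ q ∉ s then (MvPolynomial.X s : MvPolynomial (Finset α) k) else 0) =
      (∑ s : Finset α, if (p ∈ s ∧ q ∉ s) ∧ (U ⊆ s ∧ s ⊆ U ∪ τ a) then MvPolynomial.X s else 0) +
      (∑ s : Finset α, if (p ∈ s ∧ q ∉ s) ∧ ¬ (U ⊆ s ∧ s ⊆ U ∪ τ a) then MvPolynomial.X s else 0) := by
    intro p q
    rw [← Finset.sum_add_distrib]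
    apply Finset.sum_congr rfl
    intro s _
    by_cases h1 : p ∈ s ∧ q ∉ s
    · by_cases h2 : U ⊆ s ∧ s ⊆ U ∪ τ a
      · simp [h1, h2]
      · simp [h1, h2]
    · simp [h1]
  -- bad sums times gm τ lie in the ideal
  have badmem : ∀ p q : α, p ∈ τ a → q ∈ τ a →
      (∑ s : Finset α, if (p ∈ s ∧ q ∉ s) ∧ ¬ (U ⊆ s ∧ s ⊆ U ∪ τ a) then
        (MvPolynomial.X s : MvPolynomial (Finset α) k) else 0) * gm τ ∈ IB α k := by
    intro p q hp hq
    rw [Finset.sum_mul]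
    apply Ideal.sum_mem
    intro s _
    rw [ite_mul, zero_mul]
    split_ifs with h
    · exact bad_term τ hdisj hcov a s p q hp h.1.1 hq h.1.2 (by rw [← hU]; exact h.2)
    · exact Ideal.zero_mem _
  rw [step12 i j hi hj, step12 j i hj hi]
  have keyeq :
      (∑ s : Finset α, if (i ∈ s ∧ j ∉ s) ∧ (U ⊆ s ∧ s ⊆ U ∪ τ a) then
          (MvPolynomial.X s : MvPolynomial (Finset α) k) else 0) * gm τ -
      (∑ s : Finset α, if (j ∈ s ∧ i ∉ s) ∧ (U ⊆ s ∧ s ⊆ U ∪ τ a) then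
          MvPolynomial.X s else 0) * gm τ =
      ((∑ s : Finset α, if i ∈ s ∧ j ∉ s then (MvPolynomial.X s : MvPolynomial (Finset α) k) else 0) -
        (∑ s : Finset α, if j ∈ s ∧ i ∉ s then MvPolynomial.X s else 0)) * gm τ -
      (∑ s : Finset α, if (i ∈ s ∧ j ∉ s) ∧ ¬ (U ⊆ s ∧ s ⊆ U ∪ τ a) then
          MvPolynomial.X s else 0) * gm τ +
      (∑ s : Finset α, if (j ∈ s ∧ i ∉ s) ∧ ¬ (U ⊆ s ∧ s ⊆ U ∪ τ a) then
          MvPolynomial.X s else 0) * gm τ := by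
    rw [split i j, split j i]
    ring
  rw [keyeq]
  exact Ideal.add_mem _
    (Ideal.sub_mem _ (Ideal.mul_mem_right _ _ hr) (badmem i j hi hj))
    (badmem j i hj hi)
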